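/- arXiv:2103.16416 — 4 statements merged into one kernel-verified Lean document; each statement's English description precedes it below -/
import Mathlib

section
/- Let σ be a satisfying assignment of φ that sets exactly k variables to True, with σ(x_n) = True. Then there exists a linear order on the vertices of T_φ that places the sink of the transitive tournament induced by F_n last and whose implied feedback arc set has size at most n·s₁² + 2(n−k)·s₁ + (3n−1)m·s₁·s₂ + m²·s₂² + 9m(n−1)·s₂. -/
/-! ### The tournament `T_φ` of the reduction

A CNF formula `φ` with variables `x_1, …, x_n` and clauses `c_1, …, c_m` in which no
variable occurs twice in a clause is given by its occurrence function
`occ : Fin n → Fin m → Option Bool`, where `occ i j = some true` (resp. `some false`)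
means `x_i` occurs positively (resp. negatively) in `c_j`, and `none` means `x_i`
does not occur in `c_j`. -/

/-- The names of the `6n + m` modules of the tournament `T_φ`. -/
inductive ModName (n m : ℕ) : Type where
  | A : Fin n → ModName n m
  | B : Fin n → ModName n m
  | C : Fin n → ModName n m
  | D : Fin n → ModName n m
  | E : Fin n → ModName n m
  | F : Fin n → ModName n m
  | T : Fin m → ModName n m
  deriving DecidableEq, Fintype

/-- The group (variable index) of a module, if it is a variable module. -/
def grp? {n m : ℕ} : ModName n m → Option (Fin n)
  | .A i => some i
  | .B i => some i
  | .C i => some i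
  | .D i => some i
  | .E i => some i
  | .F i => some i
  | .T _ => none

/-- The clause index of a module, if it is a clause module. -/
def clause? {n m : ℕ} : ModName n m → Option (Fin m)
  | .T j => some j
  | _ => none

/-- The rank of a module within its group: `A = 0, B = 1, C = 2, D = 3, E = 4, F = 5`. -/
def rk {n m : ℕ} : ModName n m → ℕ
  | .A _ => 0
  | .B _ => 1
  | .C _ => 2
  | .D _ => 3
  | .E _ => 4
  | .F _ => 5
  | .T _ => 6

/-- The size of each module: `A_i, B_i, C_i, D_i, F_i` have size `s₁`; `E_i` has size
`s₁ + 2` for `i < n` and `s₁ + 3` for `i = n` (i.e. index `n - 1`); `T_j` has size `s₂`. -/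
def msize (n m s₁ s₂ : ℕ) : ModName n m → ℕ
  | .A _ => s₁
  | .B _ => s₁
  | .C _ => s₁
  | .D _ => s₁
  | .E i => if (i : ℕ) = n - 1 then s₁ + 3 else s₁ + 2
  | .F _ => s₁
  | .T _ => s₂

/-- The vertex set of `T_φ`: a vertex is a module name together with an index inside
the module. -/
abbrev Vtx (n m s₁ s₂ : ℕ) : Type := Σ M : ModName n m, Fin (msize n m s₁ s₂ M)

/-- Whether all arcs go from `T_j` to the variable module of rank `r` of a group `i`
with `occ i j = o`: if `x_i` does not occur in `c_j`, `T_j` beats `A_i ∪ B_i ∪ C_i`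
(ranks 0,1,2); if positively, `T_j` beats `A_i ∪ B_i ∪ F_i` (ranks 0,1,5); if
negatively, `T_j` beats `A_i ∪ C_i ∪ D_i` (ranks 0,2,3). -/
def tBeats : Option Bool → ℕ → Prop
  | none, r => r = 0 ∨ r = 1 ∨ r = 2
  | some true, r => r = 0 ∨ r = 1 ∨ r = 5
  | some false, r => r = 0 ∨ r = 2 ∨ r = 3

/-- The direction of the arcs between two distinct modules of `T_φ`. -/
def modArc {n m : ℕ} (occ : Fin n → Fin m → Option Bool) (M M' : ModName n m) : Prop :=
  (∃ i i' : Fin n, grp? M = some i ∧ grp? M' = some i' ∧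
    (i < i' ∨ (i = i' ∧ ((rk M < rk M' ∧ ¬(rk M = 3 ∧ rk M' = 5)) ∨
      (rk M = 5 ∧ rk M' = 3))))) ∨
  (∃ j j' : Fin m, clause? M = some j ∧ clause? M' = some j' ∧ j < j') ∨
  (∃ j : Fin m, ∃ i : Fin n, clause? M = some j ∧ grp? M' = some i ∧
    tBeats (occ i j) (rk M')) ∨
  (∃ i : Fin n, ∃ j : Fin m, grp? M = some i ∧ clause? M' = some j ∧
    ¬ tBeats (occ i j) (rk M))

/-- The arc relation of the tournament `T_φ`: inside a module, arcs follow the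
transitive order of the indices; between distinct modules, arcs are given by `modArc`. -/
def arc {n m s₁ s₂ : ℕ} (occ : Fin n → Fin m → Option Bool) :
    Vtx n m s₁ s₂ → Vtx n m s₁ s₂ → Prop :=
  fun u v => (u.1 = v.1 ∧ (u.2 : ℕ) < (v.2 : ℕ)) ∨ (u.1 ≠ v.1 ∧ modArc occ u.1 v.1)

/-- The set of vertices of a module. -/
def mset {n m s₁ s₂ : ℕ} (M : ModName n m) : Set (Vtx n m s₁ s₂) := {v | v.1 = M}

/-- The set of vertices of group `i`: `A_i ∪ B_i ∪ C_i ∪ D_i ∪ E_i ∪ F_i`. -/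
def gset {n m s₁ s₂ : ℕ} (i : Fin n) : Set (Vtx n m s₁ s₂) := {v | grp? v.1 = some i}

/-- The sink of the transitive tournament induced by the module `F_n`. -/
def fnSink (n m s₁ s₂ : ℕ) (hn : 0 < n) (hs₁ : 0 < s₁) : Vtx n m s₁ s₂ :=
  ⟨.F ⟨n - 1, Nat.sub_lt hn one_pos⟩, ⟨s₁ - 1, Nat.sub_lt hs₁ one_pos⟩⟩

/-- The feedback arc set implied by an ordering `r`. -/
def fasSet {V : Type*} (A r : V → V → Prop) : Set (V × V) := {p | A p.1 p.2 ∧ r p.2 p.1}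

/-- `r` is an optimal ordering: a strict linear order whose implied feedback arc set
has minimum size. -/
def IsOptimalOrder {V : Type*} (A r : V → V → Prop) : Prop :=
  IsStrictTotalOrder V r ∧
    ∀ r' : V → V → Prop, IsStrictTotalOrder V r' → (fasSet A r).ncard ≤ (fasSet A r').ncard

/-- `r` places `v` last. -/
def PlacesLast {V : Type*} (r : V → V → Prop) (v : V) : Prop := ∀ u, u ≠ v → r u v

/-- `v` is a Slater winner: some optimal order places `v` last. -/
def SlaterWinner {V : Type*} (A : V → V → Prop) (v : V) : Prop :=
  ∃ r : V → V → Prop, IsOptimalOrder A r ∧ PlacesLast r v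

/-- The assignment `σ` satisfies clause `c_j`. -/
def SatClause {n m : ℕ} (occ : Fin n → Fin m → Option Bool) (σ : Fin n → Bool)
    (j : Fin m) : Prop :=
  ∃ i : Fin n, (occ i j = some true ∧ σ i = true) ∨ (occ i j = some false ∧ σ i = false)

/-- The assignment `σ` satisfies `φ`. -/
def Sat {n m : ℕ} (occ : Fin n → Fin m → Option Bool) (σ : Fin n → Bool) : Prop :=
  ∀ j : Fin m, SatClause occ σ j

/-- The weight of a truth assignment: the number of variables set to `true`. -/
def wt {n : ℕ} (σ : Fin n → Bool) : ℕ := (Finset.univ.filter (fun i => σ i = true)).card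

/-- Every element of `S` comes before every element of `S'` in the order `r`. -/
def Before {V : Type*} (r : V → V → Prop) (S S' : Set V) : Prop := ∀ u ∈ S, ∀ v ∈ S', r u v

/-- `S` is contiguous in the ordering `r`. -/
def Contig {V : Type*} (r : V → V → Prop) (S : Set V) : Prop :=
  ¬ ∃ x ∈ S, ∃ y ∈ S, ∃ z, z ∉ S ∧ r x z ∧ r z y

/-- A linear order on the vertices of `T_φ` is structured if every module is contiguous,
groups appear in increasing order, within each group `A_i ≺ B_i ≺ C_i` come before
`D_i ∪ E_i ∪ F_i`, and the last three modules appear in one of the cyclic orders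
`D_i ≺ E_i ≺ F_i`, `E_i ≺ F_i ≺ D_i`, `F_i ≺ D_i ≺ E_i`. -/
def Structured {n m s₁ s₂ : ℕ} (r : Vtx n m s₁ s₂ → Vtx n m s₁ s₂ → Prop) : Prop :=
  (∀ M : ModName n m, Contig r (mset M)) ∧
  (∀ i i' : Fin n, i < i' → Before r (gset i) (gset i')) ∧
  (∀ i : Fin n,
    Before r (mset (.A i)) (mset (.B i)) ∧
    Before r (mset (.B i)) (mset (.C i)) ∧
    Before r (mset (.A i) ∪ mset (.B i) ∪ mset (.C i))
      (mset (.D i) ∪ mset (.E i) ∪ mset (.F i))) ∧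
  (∀ i : Fin n,
    (Before r (mset (.D i)) (mset (.E i)) ∧ Before r (mset (.E i)) (mset (.F i))) ∨
    (Before r (mset (.E i)) (mset (.F i)) ∧ Before r (mset (.F i)) (mset (.D i))) ∨
    (Before r (mset (.F i)) (mset (.D i)) ∧ Before r (mset (.D i)) (mset (.E i))))

/-- `σ` is the assignment extracted from the structured order `r`: `x_i` is set to true
iff `D_i ≺ E_i ≺ F_i`. -/
def Extracted {n m s₁ s₂ : ℕ} (r : Vtx n m s₁ s₂ → Vtx n m s₁ s₂ → Prop)
    (σ : Fin n → Bool) : Prop :=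
  ∀ i : Fin n, σ i = true ↔
    (Before r (mset (.D i)) (mset (.E i)) ∧ Before r (mset (.E i)) (mset (.F i)))

/-! Lay the modules out group by group. Group `i` starts with `A_i B_i C_i`, followed by
`D_i E_i ⋯ F_i` if `σ` sets `x_i` to true and by `E_i F_i ⋯ D_i` otherwise, where the gap `⋯`
receives the clause modules `T_j` whose clause is satisfied by the literal of `x_i` (one chosen
literal per clause). Inside a module the vertices follow the transitive order. As `x_n` is true,
`F_n` is the last module. Every backward arc joins two different modules, so the feedback arc set
is counted module pair by module pair: a group costs `|F_i| |D_i| = s₁²` if `x_i` is true and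
`|D_i| |E_i| = s₁ (s₁ + 2)` otherwise; a clause module costs `2 s₁ s₂` against the group of its
chosen literal and at most `3 s₁ s₂ + 3 s₂` against any other group; the clause modules cost at
most `m² s₂²` among themselves. -/

open Function Finset

section LexBlowup

variable {ι β : Type*} {s : ι → ℕ}

lemma ncard_setOf_sigma_pairs [Fintype ι] (P : ι → ι → Prop) [DecidableRel P] :
    {p : (Σ i, Fin (s i)) × (Σ i, Fin (s i)) | P p.1.1 p.2.1}.ncard =
      ∑ i, ∑ j, if P i j then s i * s j else 0 := by
  rw [Set.ncard_eq_toFinset_card', Set.toFinset_ofPred, card_filter, Fintype.sum_prod_type,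
    Fintype.sum_sigma]
  simp only [Fintype.sum_sigma]
  simp [sum_comm (γ := Fin _), apply_ite]

def lexKey (f : ι → β) (u : Σ i, Fin (s i)) : β ×ₗ ℕ := toLex (f u.1, (u.2 : ℕ))

lemma lexKey_injective {f : ι → β} (hf : Injective f) : Injective (lexKey (s := s) f) := by
  rintro ⟨i, a⟩ ⟨j, b⟩ h
  simp only [lexKey, toLex_inj, Prod.mk.injEq] at h
  obtain rfl := hf h.1
  simp [Fin.ext h.2]

variable [LinearOrder β]

lemma isStrictTotalOrder_lexKey {f : ι → β} (hf : Injective f) :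
    IsStrictTotalOrder (Σ i, Fin (s i)) (InvImage (· < ·) (lexKey f)) :=
  { InvImage.trichotomous (lexKey_injective hf) with }

lemma fasSet_lexKey (R : ι → ι → Prop) {f : ι → β} (hf : Injective f) :
    fasSet (fun u v : Σ i, Fin (s i) => (u.1 = v.1 ∧ (u.2 : ℕ) < v.2) ∨ (u.1 ≠ v.1 ∧ R u.1 v.1))
      (InvImage (· < ·) (lexKey f)) = {p | R p.1.1 p.2.1 ∧ f p.2.1 < f p.1.1} := by
  ext ⟨⟨i, a⟩, ⟨j, b⟩⟩
  simp only [fasSet, InvImage, lexKey, Prod.Lex.toLex_lt_toLex, Set.mem_ofPred_eq]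
  constructor
  · rintro ⟨⟨rfl, hab⟩ | ⟨hij, hR⟩, hlt | ⟨heq, hba⟩⟩
    · exact absurd hlt (lt_irrefl _)
    · omega
    · exact ⟨hR, hlt⟩
    · exact absurd (hf heq.symm) hij
  · rintro ⟨hR, hlt⟩
    exact ⟨Or.inr ⟨fun h => hlt.ne (by rw [h]), hR⟩, Or.inl hlt⟩

lemma placesLast_lexKey {f : ι → β} {i₀ : ι} (hf : ∀ i ≠ i₀, f i < f i₀) {a₀ : Fin (s i₀)}
    (ha₀ : ∀ a, a ≤ a₀) : PlacesLast (InvImage (· < ·) (lexKey f)) ⟨i₀, a₀⟩ := by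
  rintro ⟨i, a⟩ h
  refine Prod.Lex.toLex_lt_toLex.2 ?_
  by_cases hi : i = i₀
  · subst hi
    have hne : a ≠ a₀ := fun h' => h (h' ▸ rfl)
    exact Or.inr ⟨rfl, lt_of_le_of_ne (ha₀ a) (Fin.val_injective.ne hne)⟩
  · exact Or.inl (hf i hi)

end LexBlowup

namespace ModName

variable {n m : ℕ}

def ofRank (i : Fin n) : Fin 6 → ModName n m := ![A i, B i, C i, D i, E i, F i]

def equivSum : ModName n m ≃ (Fin n × Fin 6) ⊕ Fin m where
  toFun
    | A i => .inl (i, 0)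
    | B i => .inl (i, 1)
    | C i => .inl (i, 2)
    | D i => .inl (i, 3)
    | E i => .inl (i, 4)
    | F i => .inl (i, 5)
    | T j => .inr j
  invFun
    | .inl (i, r) => ofRank i r
    | .inr j => T j
  left_inv M := by cases M <;> rfl
  right_inv
    | .inl (i, r) => by fin_cases r <;> rfl
    | .inr j => rfl

lemma sum_eq {M : Type*} [AddCommMonoid M] (f : ModName n m → M) :
    ∑ X, f X = ∑ p : Fin n × Fin 6, f (ofRank p.1 p.2) + ∑ j, f (T j) := by
  rw [← equivSum.symm.sum_comp, Fintype.sum_sum_type]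
  rfl

lemma sum_sum_eq {M : Type*} [AddCommMonoid M] (g : ModName n m → ModName n m → M) :
    ∑ X, ∑ Y, g X Y =
      ∑ p : Fin n × Fin 6, ∑ q : Fin n × Fin 6, g (ofRank p.1 p.2) (ofRank q.1 q.2) +
        ∑ j, ∑ p : Fin n × Fin 6, (g (T j) (ofRank p.1 p.2) + g (ofRank p.1 p.2) (T j)) +
        ∑ j, ∑ j', g (T j) (T j') := by
  simp only [sum_eq, sum_add_distrib]
  rw [sum_comm (s := (univ : Finset (Fin n × Fin 6))) (t := (univ : Finset (Fin m)))]
  abel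

lemma grp?_ofRank (i : Fin n) (r : Fin 6) : grp? (ofRank (m := m) i r) = some i := by
  fin_cases r <;> rfl

lemma clause?_ofRank (i : Fin n) (r : Fin 6) : clause? (ofRank (m := m) i r) = none := by
  fin_cases r <;> rfl

end ModName

open ModName

variable {n m s₁ s₂ : ℕ}

lemma Sat.exists_witness {occ : Fin n → Fin m → Option Bool} {σ : Fin n → Bool}
    (h : Sat occ σ) : ∃ w : Fin m → Fin n, ∀ j, occ (w j) j = some (σ (w j)) := by
  choose w hw using h
  exact ⟨w, fun j => by rcases hw j with ⟨h, h'⟩ | ⟨h, h'⟩ <;> rwa [h']⟩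

/-- The layout described above, as (group, place in the group); the clause modules take the
places `5, …, m + 4`. -/
def slot (σ : Fin n → Bool) (w : Fin m → Fin n) : ModName n m → Fin n ×ₗ ℕ
  | A i => toLex (i, 0)
  | B i => toLex (i, 1)
  | C i => toLex (i, 2)
  | D i => toLex (i, if σ i then 3 else m + 5)
  | E i => toLex (i, if σ i then 4 else 3)
  | F i => toLex (i, if σ i then m + 5 else 4)
  | T j => toLex (w j, j + 5)

variable {σ : Fin n → Bool} {w : Fin m → Fin n}

lemma slot_injective : Injective (slot (m := m) σ w) := by
  intro M N h
  rcases M with i | i | i | i | i | i | j <;> rcases N with i' | i' | i' | i' | i' | i' | j' <;>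
    simp only [slot, toLex_inj, Prod.mk.injEq] at h <;> (try split_ifs at h) <;>
    first
      | omega
      | exact h.2.elim
      | (obtain ⟨rfl, -⟩ := h; first | rfl | simp_all)
      | exact congrArg T (Fin.ext (by omega))

lemma slot_ofRank_fst (i : Fin n) (r : Fin 6) : (ofLex (slot σ w (ofRank i r))).1 = i := by
  fin_cases r <;> rfl

lemma slot_lt_slot_F {l : Fin n} (hl : ∀ i, i ≤ l) (hσl : σ l = true) {M : ModName n m}
    (hM : M ≠ F l) : slot σ w M < slot σ w (F l) := by
  have key : ∀ i k, (i = l → k < m + 5) → toLex (i, k) < toLex (l, m + 5) := fun i k hk =>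
    Prod.Lex.toLex_lt_toLex.2 ((hl i).lt_or_eq.imp id fun h => ⟨h, hk h⟩)
  rw [show slot σ w (F l) = toLex (l, m + 5) by simp [slot, hσl]]
  rcases M with i | i | i | i | i | i | j <;> apply key <;> rintro rfl <;> simp_all

lemma placesLast_fnSink (hn : 0 < n) (hs₁ : 0 < s₁)
    (hσ : σ ⟨n - 1, Nat.sub_lt hn one_pos⟩ = true) :
    PlacesLast (InvImage (· < ·) (lexKey (slot σ w))) (fnSink n m s₁ s₂ hn hs₁) := by
  refine placesLast_lexKey (f := slot σ w) (i₀ := F ⟨n - 1, Nat.sub_lt hn one_pos⟩)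
    (fun _ hM => slot_lt_slot_F (fun i => ?_) hσ hM) fun a => ?_
  · exact Fin.le_def.2 (Nat.le_sub_one_of_lt i.isLt)
  · exact Fin.le_def.2 (Nat.le_sub_one_of_lt a.isLt)

open Classical in
noncomputable def backArcCount (occ : Fin n → Fin m → Option Bool) (σ : Fin n → Bool)
    (w : Fin m → Fin n) (s₁ s₂ : ℕ) (M N : ModName n m) : ℕ :=
  if modArc occ M N ∧ slot σ w N < slot σ w M then msize n m s₁ s₂ M * msize n m s₁ s₂ N else 0

variable {occ : Fin n → Fin m → Option Bool}

lemma backArcCount_le (M N : ModName n m) :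
    backArcCount occ σ w s₁ s₂ M N ≤ msize n m s₁ s₂ M * msize n m s₁ s₂ N := by
  unfold backArcCount
  split_ifs <;> omega

lemma backArcCount_ofRank_of_ne {i i' : Fin n} (h : i ≠ i') (r r' : Fin 6) :
    backArcCount occ σ w s₁ s₂ (ofRank i r) (ofRank i' r') = 0 := by
  refine if_neg fun ⟨harc, hlt⟩ => ?_
  rcases h.lt_or_gt with h | h
  · refine hlt.not_gt (Prod.Lex.lt_iff.2 (Or.inl ?_))
    rwa [slot_ofRank_fst, slot_ofRank_fst]
  · rcases harc with ⟨a, b, ha, hb, hab⟩ | ⟨_, _, hc, -⟩ | ⟨_, _, hc, -⟩ | ⟨_, _, -, hc, -⟩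
    · rw [grp?_ofRank, Option.some.injEq] at ha hb
      subst ha hb
      rcases hab with hab | ⟨rfl, -⟩
      · exact h.not_gt hab
      · exact h.false
    all_goals rw [clause?_ofRank] at hc; cases hc

lemma sum_backArcCount_group (i : Fin n) :
    ∑ r, ∑ r', backArcCount occ σ w s₁ s₂ (ofRank i r) (ofRank i r') =
      if σ i then s₁ * s₁ else s₁ * msize n m s₁ s₂ (E i) := by
  cases h : σ i <;>
  simp [Fin.sum_univ_six, ofRank, backArcCount, modArc, grp?, clause?, rk, slot, h,
    Prod.Lex.toLex_lt_toLex, msize]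

lemma sum_backArcCount_variables (hσ : ∀ i : Fin n, (i : ℕ) = n - 1 → σ i = true) :
    ∑ p : Fin n × Fin 6, ∑ q : Fin n × Fin 6,
        backArcCount occ σ w s₁ s₂ (ofRank p.1 p.2) (ofRank q.1 q.2) =
      n * s₁ ^ 2 + 2 * (n - wt σ) * s₁ := by
  have hgroup : ∀ i, ∑ r, ∑ q : Fin n × Fin 6,
      backArcCount occ σ w s₁ s₂ (ofRank i r) (ofRank q.1 q.2) =
        s₁ * s₁ + if σ i then 0 else 2 * s₁ := by
    intro i
    have hsingle : ∀ r, ∑ q : Fin n × Fin 6,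
        backArcCount occ σ w s₁ s₂ (ofRank i r) (ofRank q.1 q.2) =
          ∑ r', backArcCount occ σ w s₁ s₂ (ofRank i r) (ofRank i r') := fun r => by
      rw [Fintype.sum_prod_type, sum_eq_single i
        (fun i' _ h => sum_eq_zero fun r' _ => backArcCount_ofRank_of_ne h.symm r r') (by simp)]
    rw [sum_congr rfl fun r _ => hsingle r, sum_backArcCount_group]
    by_cases h : σ i
    · simp [h]
    · have hE : msize n m s₁ s₂ (E i) = s₁ + 2 := if_neg fun h' => h (hσ i h')
      simp only [h, Bool.false_eq_true, if_false, hE]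
      ring
  have hcard := card_filter_add_card_filter_not (s := (univ : Finset (Fin n))) (fun i => σ i)
  rw [card_univ, Fintype.card_fin] at hcard
  rw [Fintype.sum_prod_type, sum_congr rfl fun i _ => hgroup i, sum_add_distrib, sum_ite,
    sum_const_zero, sum_const, sum_const, card_univ, Fintype.card_fin, smul_eq_mul, smul_eq_mul,
    wt, show #{i | ¬σ i = true} = n - #{i | σ i = true} by omega]
  ring

lemma sum_backArcCount_clause_of_lt {j : Fin m} {i : Fin n} (h : i < w j) :
    ∑ r, (backArcCount occ σ w s₁ s₂ (T j) (ofRank i r) +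
      backArcCount occ σ w s₁ s₂ (ofRank i r) (T j)) = 3 * (s₁ * s₂) := by
  rcases ho : occ i j with _ | _ | _ <;>
  simp [Fin.sum_univ_six, ofRank, backArcCount, modArc, grp?, clause?, rk, slot, ho, h, h.not_gt,
    h.ne', Prod.Lex.toLex_lt_toLex, tBeats, msize] <;> ring

lemma sum_backArcCount_clause_of_gt {j : Fin m} {i : Fin n} (h : w j < i) :
    ∑ r, (backArcCount occ σ w s₁ s₂ (T j) (ofRank i r) +
      backArcCount occ σ w s₁ s₂ (ofRank i r) (T j)) = (2 * s₁ + msize n m s₁ s₂ (E i)) * s₂ := by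
  rcases ho : occ i j with _ | _ | _ <;>
  simp [Fin.sum_univ_six, ofRank, backArcCount, modArc, grp?, clause?, rk, slot, ho, h, h.not_gt,
    h.ne', Prod.Lex.toLex_lt_toLex, tBeats, msize] <;> split_ifs <;> ring

lemma sum_backArcCount_clause_self {j : Fin m} (hj : occ (w j) j = some (σ (w j))) :
    ∑ r, (backArcCount occ σ w s₁ s₂ (T j) (ofRank (w j) r) +
      backArcCount occ σ w s₁ s₂ (ofRank (w j) r) (T j)) = 2 * (s₁ * s₂) := by
  have := j.isLt
  cases h : σ (w j) <;> rw [h] at hj <;>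
  simp [Fin.sum_univ_six, ofRank, backArcCount, modArc, grp?, clause?, rk, slot, hj, h,
    Prod.Lex.toLex_lt_toLex, tBeats, this.not_gt, msize] <;>
  rw [if_neg (by omega), if_neg (by omega)] <;> ring

lemma msize_E_le (i : Fin n) : msize n m s₁ s₂ (E i) ≤ s₁ + 3 := by
  simp only [msize]
  split_ifs <;> omega

lemma sum_backArcCount_clause_le {j : Fin m} (hj : occ (w j) j = some (σ (w j))) (i : Fin n) :
    ∑ r, (backArcCount occ σ w s₁ s₂ (T j) (ofRank i r) +
      backArcCount occ σ w s₁ s₂ (ofRank i r) (T j)) ≤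
        if i = w j then 2 * (s₁ * s₂) else 3 * (s₁ * s₂) + 3 * s₂ := by
  rcases lt_trichotomy i (w j) with h | rfl | h
  · rw [sum_backArcCount_clause_of_lt h, if_neg h.ne]
    omega
  · rw [sum_backArcCount_clause_self hj, if_pos rfl]
  · rw [sum_backArcCount_clause_of_gt h, if_neg h.ne']
    nlinarith [msize_E_le (m := m) (s₁ := s₁) (s₂ := s₂) i]

lemma sum_backArcCount_clauses_le (hw : ∀ j, occ (w j) j = some (σ (w j))) :
    ∑ j, ∑ p : Fin n × Fin 6, (backArcCount occ σ w s₁ s₂ (T j) (ofRank p.1 p.2) +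
      backArcCount occ σ w s₁ s₂ (ofRank p.1 p.2) (T j)) ≤
        m * (2 * (s₁ * s₂) + (n - 1) * (3 * (s₁ * s₂) + 3 * s₂)) := by
  calc _ ≤ ∑ _j : Fin m, (2 * (s₁ * s₂) + (n - 1) * (3 * (s₁ * s₂) + 3 * s₂)) :=
        sum_le_sum fun j _ => ?_
    _ = _ := by simp
  rw [Fintype.sum_prod_type]
  refine (sum_le_sum fun i _ => sum_backArcCount_clause_le (hw j) i).trans_eq ?_
  rw [sum_ite, filter_eq', filter_ne', if_pos (mem_univ _), sum_singleton, sum_const,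
    card_erase_of_mem (mem_univ _), card_univ, Fintype.card_fin, smul_eq_mul]

lemma sum_backArcCount_clausePairs_le :
    ∑ j, ∑ j', backArcCount occ σ w s₁ s₂ (T j) (T j') ≤ m * (m * (s₂ * s₂)) :=
  (sum_le_sum fun j _ => sum_le_sum fun j' _ => backArcCount_le (T j) (T j')).trans_eq
    (by simp [msize])

lemma sum_backArcCount_le (hw : ∀ j, occ (w j) j = some (σ (w j)))
    (hσ : ∀ i : Fin n, (i : ℕ) = n - 1 → σ i = true) :
    ∑ M, ∑ N, backArcCount occ σ w s₁ s₂ M N ≤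
      n * s₁ ^ 2 + 2 * (n - wt σ) * s₁ +
        m * (2 * (s₁ * s₂) + (n - 1) * (3 * (s₁ * s₂) + 3 * s₂)) + m * (m * (s₂ * s₂)) := by
  rw [sum_sum_eq, sum_backArcCount_variables hσ]
  exact add_le_add (add_le_add le_rfl (sum_backArcCount_clauses_le hw))
    sum_backArcCount_clausePairs_le

theorem stmt15_general (n m s₁ s₂ : ℕ) (hn : 0 < n) (hs₁ : 0 < s₁)
    (occ : Fin n → Fin m → Option Bool)
    (σ : Fin n → Bool) (hσ : Sat occ σ) (k : ℕ)
    (hk : (Finset.univ.filter (fun i : Fin n => σ i = true)).card = k)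
    (hxn : σ ⟨n - 1, Nat.sub_lt hn one_pos⟩ = true) :
    ∃ r : Vtx n m s₁ s₂ → Vtx n m s₁ s₂ → Prop, IsStrictTotalOrder (Vtx n m s₁ s₂) r ∧
      PlacesLast r (fnSink n m s₁ s₂ hn hs₁) ∧
      (fasSet (arc occ) r).ncard ≤
        n * s₁ ^ 2 + 2 * (n - k) * s₁ + (3 * n - 1) * m * s₁ * s₂ + m ^ 2 * s₂ ^ 2 +
          9 * m * (n - 1) * s₂ := by
  classical
  obtain ⟨w, hw⟩ := hσ.exists_witness
  have hlast : ∀ i : Fin n, (i : ℕ) = n - 1 → σ i = true := fun i h =>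
    (Fin.ext h : i = ⟨n - 1, Nat.sub_lt hn one_pos⟩) ▸ hxn
  refine ⟨InvImage (· < ·) (lexKey (slot σ w)), isStrictTotalOrder_lexKey slot_injective,
    placesLast_fnSink hn hs₁ hxn, ?_⟩
  rw [show fasSet (arc occ) _ = _ from fasSet_lexKey (modArc occ) slot_injective]
  refine ((ncard_setOf_sigma_pairs fun M N => modArc occ M N ∧ slot σ w N < slot σ w M).trans_le
    (sum_backArcCount_le hw hlast)).trans ?_
  obtain ⟨a, rfl⟩ := Nat.exists_eq_add_one_of_ne_zero hn.ne'
  rw [show wt σ = k from hk, show 3 * (a + 1) - 1 = 3 * a + 2 by omega, Nat.add_sub_cancel]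
  nlinarith [Nat.zero_le (m * a * s₂)]

/-- From a satisfying assignment of `φ` that sets exactly `k` variables (including `x_n`)
to true, one obtains a linear order placing the sink of `F_n` last whose implied feedback
arc set has size at most `n·s₁² + 2(n−k)·s₁ + (3n−1)m·s₁·s₂ + m²·s₂² + 9m(n−1)·s₂`. -/
theorem stmt15 (n m s₁ s₂ : ℕ) (hn : 0 < n) (hm : 0 < m) (hs₁ : 0 < s₁) (hs₂ : 0 < s₂)
    (occ : Fin n → Fin m → Option Bool)
    (h3lit : ∀ j : Fin m, ({i : Fin n | occ i j ≠ none}).ncard ≤ 3)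
    (hallF : ∀ j : Fin m, ∃ i : Fin n, occ i j = some false)
    (σ : Fin n → Bool) (hσ : Sat occ σ) (k : ℕ)
    (hk : (Finset.univ.filter (fun i : Fin n => σ i = true)).card = k)
    (hxn : σ ⟨n - 1, Nat.sub_lt hn one_pos⟩ = true) :
    ∃ r : Vtx n m s₁ s₂ → Vtx n m s₁ s₂ → Prop, IsStrictTotalOrder (Vtx n m s₁ s₂) r ∧
      PlacesLast r (fnSink n m s₁ s₂ hn hs₁) ∧
      (fasSet (arc occ) r).ncard ≤
        n * s₁ ^ 2 + 2 * (n - k) * s₁ + (3 * n - 1) * m * s₁ * s₂ + m ^ 2 * s₂ ^ 2 +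
          9 * m * (n - 1) * s₂ :=
  stmt15_general n m s₁ s₂ hn hs₁ occ σ hσ k hk hxn
end

section
/- Let ≺ be a structured linear order on the vertices of T_φ whose extracted assignment σ satisfies φ and sets exactly k variables to True. Then the feedback arc set implied by ≺ has size at least n·s₁² + 2(n−k)·s₁ + (3n−1)m·s₁·s₂; moreover, if σ(x_n) = False, then it has size at least n·s₁² + 2(n−k)·s₁ + s₁ + (3n−1)m·s₁·s₂. -/
/-!
Every module is contiguous, so of two modules one lies entirely before the other, and when
the arcs between them point backwards all `|M|·|M'|` of them are in the feedback arc set;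
distinct ordered pairs of modules contribute disjoint sets of arcs.

Within group `i` the cyclic order of `D_i, E_i, F_i` leaves one backward pair: `F_i → D_i`,
of size `s₁²`, when `x_i` is true, and `D_i → E_i` or `E_i → F_i`, of size `s₁·|E_i|`,
otherwise; since `|E_i| = s₁ + 2` (`s₁ + 3` for `i = n`) this gives the term `2(n − k)·s₁`,
and the extra `s₁` when `x_n` is false.

`T_j` beats exactly three of the six modules of a group. If the group lies on one side of
`T_j`, three of its modules are therefore joined to `T_j` by backward arcs. Since groups
follow each other, `T_j` falls inside at most one group, and there `A_i` precedes `T_j` and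
still gives a backward pair, as does one module of a pair "beaten by `T_j`, then beating
`T_j`". This yields `3n − 1` backward pairs of size at least `s₁·s₂` for every clause.
-/

open Finset

section Order

variable {V : Type*} {r : V → V → Prop} {S S' S'' : Set V}

theorem Before.trans [IsTrans V r] (h : Before r S S') (h' : Before r S' S'')
    (hS' : S'.Nonempty) : Before r S S'' := by
  obtain ⟨w, hw⟩ := hS'
  exact fun u hu v hv => _root_.trans (h u hu w hw) (h' w hw v hv)

theorem Before.not_before [IsStrictOrder V r] (h : Before r S S') (hS : S.Nonempty)
    (hS' : S'.Nonempty) : ¬ Before r S' S := by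
  obtain ⟨u, hu⟩ := hS
  obtain ⟨v, hv⟩ := hS'
  exact fun h' => irrefl u (_root_.trans (h u hu v hv) (h' v hv u hu))

theorem Contig.before_or_before [Std.Trichotomous r] (hS : Contig r S) (hS' : Contig r S')
    (hdisj : Disjoint S S') : Before r S S' ∨ Before r S' S := by
  have lt_or_lt : ∀ {x y}, x ∈ S → y ∈ S' → r x y ∨ r y x := fun hx hy =>
    (trichotomous_of r _ _).imp_right (Or.resolve_left · (hdisj.ne_of_mem hx hy))
  refine or_iff_not_imp_left.2 fun h v' hv' u' hu' => ?_
  obtain ⟨u, hu, v, hv, huv⟩ : ∃ u ∈ S, ∃ v ∈ S', ¬ r u v := by simpa [Before] using h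
  have hvu := (lt_or_lt hu hv).resolve_left huv
  refine (lt_or_lt hu' hv').resolve_left fun hu'v' => ?_
  rcases lt_or_lt hu' hv with hu'v | hvu'
  · exact hS ⟨u', hu', u, hu, v, hdisj.notMem_of_mem_right hv, hu'v, hvu⟩
  · exact hS' ⟨v, hv, v', hv', u', hdisj.notMem_of_mem_left hu', hvu', hu'v'⟩

end Order

theorem sum_card_mul_card_le_ncard_fasSet {V ι κ : Type*} [Fintype V] [DecidableEq ι]
    {A r : V → V → Prop} (π : V → ι) (g : κ → ι × ι) {s : Finset κ} (hg : Set.InjOn g s)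
    (hback : ∀ x ∈ s, ∀ u v, π u = (g x).1 → π v = (g x).2 → (u, v) ∈ fasSet A r) :
    ∑ x ∈ s, #{u | π u = (g x).1} * #{v | π v = (g x).2} ≤ (fasSet A r).ncard := by
  classical
  set F : V × V → ι × ι := fun p => (π p.1, π p.2)
  have hfiber : ∀ q : ι × ι, #{u | π u = q.1} * #{v | π v = q.2} = #{p | F p = q} := by
    intro q
    rw [← card_product, ← filter_product, univ_product_univ]
    congr 1
    exact filter_congr fun p _ => by simp only [F, Prod.ext_iff]
  calc ∑ x ∈ s, #{u | π u = (g x).1} * #{v | π v = (g x).2}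
      = ∑ q ∈ s.image g, #{p | F p = q} := by
        rw [sum_image hg]; exact sum_congr rfl fun x _ => hfiber (g x)
    _ = #{p | F p ∈ s.image g} := sum_card_fiberwise_eq_card_filter _ _ _
    _ ≤ (fasSet A r).ncard := by
        rw [← Set.ncard_coe_finset]
        refine Set.ncard_le_ncard (fun p hp => ?_) (Set.toFinite _)
        obtain ⟨x, hx, hxp⟩ := mem_image.1 (mem_filter.1 hp).2
        exact hback x hx p.1 p.2 (congrArg Prod.fst hxp).symm (congrArg Prod.snd hxp).symm

section Tournament

open scoped Classical

variable {n m s₁ s₂ : ℕ} {occ : Fin n → Fin m → Option Bool}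
  {r : Vtx n m s₁ s₂ → Vtx n m s₁ s₂ → Prop} {i i' : Fin n} {j : Fin m} {M M' : ModName n m}

theorem card_filter_fst_eq_msize (M : ModName n m) :
    #{u : Vtx n m s₁ s₂ | u.1 = M} = msize n m s₁ s₂ M := by
  rw [← Fintype.card_subtype, Fintype.card_congr (Equiv.sigmaSubtype M), Fintype.card_fin]

def groupMods (i : Fin n) : Finset (ModName n m) := {.A i, .B i, .C i, .D i, .E i, .F i}

theorem mem_groupMods : M ∈ groupMods i ↔ grp? M = some i := by
  cases M <;> simp [groupMods, grp?, eq_comm]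

theorem ne_T_of_mem_groupMods (h : M ∈ groupMods i) : M ≠ .T j := by
  rintro rfl; simp [groupMods] at h

theorem eq_of_mem_groupMods (h : M ∈ groupMods i) (h' : M ∈ groupMods i') : i = i' :=
  Option.some_injective _ ((mem_groupMods.1 h).symm.trans (mem_groupMods.1 h'))

theorem le_msize_of_mem_groupMods (h : M ∈ groupMods i) : s₁ ≤ msize n m s₁ s₂ M := by
  simp only [groupMods, mem_insert, mem_singleton] at h
  rcases h with rfl | rfl | rfl | rfl | rfl | rfl <;> simp only [msize] <;> (try split_ifs) <;>
    omega

theorem mset_nonempty_of_mem_groupMods (hs₁ : 0 < s₁) (h : M ∈ groupMods i) :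
    (mset M : Set (Vtx n m s₁ s₂)).Nonempty :=
  ⟨⟨M, ⟨0, hs₁.trans_le (le_msize_of_mem_groupMods h)⟩⟩, rfl⟩

theorem mset_T_nonempty (hs₂ : 0 < s₂) (j : Fin m) :
    (mset (.T j) : Set (Vtx n m s₁ s₂)).Nonempty :=
  ⟨⟨.T j, ⟨0, hs₂⟩⟩, rfl⟩

theorem Structured.before_or_before [Std.Trichotomous r] (hstr : Structured r)
    (h : M ≠ M') : Before r (mset M) (mset M') ∨ Before r (mset M') (mset M) :=
  (hstr.1 M).before_or_before (hstr.1 M')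
    (Set.disjoint_left.2 fun _ hv hv' => h (hv.symm.trans hv'))

theorem mset_subset_gset (h : M ∈ groupMods i) : (mset M : Set (Vtx n m s₁ s₂)) ⊆ gset i :=
  fun u hu => show grp? u.1 = some i from (show u.1 = M from hu) ▸ mem_groupMods.1 h

theorem Structured.before_of_lt (hstr : Structured r) (hii : i < i') (hM : M ∈ groupMods i)
    (hM' : M' ∈ groupMods i') : Before r (mset M) (mset M') := fun u hu v hv =>
  hstr.2.1 i i' hii u (mset_subset_gset hM hu) v (mset_subset_gset hM' hv)

theorem Structured.before_of_rk_lt [IsTrans _ r] (hs₁ : 0 < s₁)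
    (hstr : Structured r) (hM : M ∈ groupMods i) (hM' : M' ∈ groupMods i)
    (hlt : rk M < rk M') (h3 : rk M < 3) : Before r (mset M) (mset M') := by
  obtain ⟨hAB, hBC, hlow⟩ := hstr.2.2.1 i
  have hAC : Before r (mset (.A i)) (mset (.C i)) :=
    hAB.trans hBC (mset_nonempty_of_mem_groupMods hs₁ (i := i) (by simp [groupMods]))
  simp only [groupMods, mem_insert, mem_singleton] at hM hM'
  rcases hM with rfl | rfl | rfl | rfl | rfl | rfl <;>
    rcases hM' with rfl | rfl | rfl | rfl | rfl | rfl <;>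
    simp only [rk] at hlt h3 <;> first
      | omega | exact hAB | exact hBC | exact hAC
      | exact fun u hu v hv => hlow u (by simp [hu]) v (by simp [hv])

theorem card_filter_tBeats (o : Option Bool) (i : Fin n) :
    #{M ∈ (groupMods i : Finset (ModName n m)) | tBeats o (rk M)} = 3 := by
  rw [groupMods]
  repeat rw [filter_insert]
  rw [filter_singleton]
  rcases o with _ | _ | _ <;> simp [tBeats, rk]

theorem card_filter_not_tBeats (o : Option Bool) (i : Fin n) :
    #{M ∈ (groupMods i : Finset (ModName n m)) | ¬ tBeats o (rk M)} = 3 := by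
  rw [groupMods]
  repeat rw [filter_insert]
  rw [filter_singleton]
  rcases o with _ | _ | _ <;> simp [tBeats, rk]

-- The modules of group `i` all of whose arcs with `T_j` point backwards.
variable (occ r) in
noncomputable def crossing (i : Fin n) (j : Fin m) : Finset (ModName n m) :=
  {M ∈ groupMods i | Before r (mset M) (mset (.T j)) ↔ tBeats (occ i j) (rk M)}

variable (r) in
def Splits (i : Fin n) (j : Fin m) : Prop :=
  (∃ M ∈ groupMods i, Before r (mset M) (mset (.T j))) ∧
    ∃ M ∈ groupMods i, Before r (mset (.T j)) (mset M)

theorem three_le_card_crossing [Std.Trichotomous r] (hstr : Structured r)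
    (h : ¬ Splits r i j) : 3 ≤ #(crossing occ r i j) := by
  rcases not_and_or.1 h with h | h <;> push Not at h
  · rw [crossing, filter_congr fun M hM => iff_false_left (h M hM), card_filter_not_tBeats]
  · have hbefore : ∀ M ∈ groupMods i, Before r (mset M) (mset (.T j)) := fun M hM =>
      (hstr.before_or_before (ne_T_of_mem_groupMods hM)).resolve_right (h M hM)
    rw [crossing, filter_congr fun M hM => iff_true_left (hbefore M hM), card_filter_tBeats]

theorem mem_crossing_or_mem_crossing [IsStrictTotalOrder _ r] (hs₁ : 0 < s₁) (hs₂ : 0 < s₂)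
    (hstr : Structured r) (hM : M ∈ groupMods i) (hM' : M' ∈ groupMods i)
    (hMM' : Before r (mset M) (mset M'))
    (hbeats : tBeats (occ i j) (rk M)) (hbeats' : ¬ tBeats (occ i j) (rk M')) :
    M ∈ crossing occ r i j ∨ M' ∈ crossing occ r i j := by
  by_cases hM_T : Before r (mset M) (mset (.T j))
  · exact Or.inl (mem_filter.2 ⟨hM, iff_of_true hM_T hbeats⟩)
  · have hT_M := (hstr.before_or_before (ne_T_of_mem_groupMods hM)).resolve_left hM_T
    have hT_M' := hT_M.trans hMM' (mset_nonempty_of_mem_groupMods hs₁ hM)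
    exact Or.inr (mem_filter.2 ⟨hM', iff_of_false
      (hT_M'.not_before (mset_T_nonempty hs₂ j) (mset_nonempty_of_mem_groupMods hs₁ hM')) hbeats'⟩)

theorem two_le_card_crossing [IsStrictTotalOrder _ r] (hs₁ : 0 < s₁) (hs₂ : 0 < s₂)
    (hstr : Structured r) : 2 ≤ #(crossing occ r i j) := by
  have hA : ModName.A i ∈ (groupMods i : Finset (ModName n m)) := by simp [groupMods]
  by_cases hA_T : Before r (mset (.A i)) (mset (.T j))
  · obtain ⟨M, M', hM, hM', hrk, hrk3, hbeats, hbeats', hMA, hM'A⟩ :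
        ∃ M M' : ModName n m, M ∈ groupMods i ∧ M' ∈ groupMods i ∧ rk M < rk M' ∧ rk M < 3 ∧
          tBeats (occ i j) (rk M) ∧ ¬ tBeats (occ i j) (rk M') ∧ M ≠ .A i ∧ M' ≠ .A i := by
      -- a module beaten by `T_j` that precedes a module beating `T_j`
      rcases occ i j with _ | _ | _
      · exact ⟨.B i, .D i, by simp [groupMods, rk, tBeats]⟩
      · exact ⟨.C i, .E i, by simp [groupMods, rk, tBeats]⟩
      · exact ⟨.B i, .C i, by simp [groupMods, rk, tBeats]⟩
    have hA_mem : ModName.A i ∈ crossing occ r i j :=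
      mem_filter.2 ⟨hA, iff_of_true hA_T (by rcases occ i j with _ | _ | _ <;> simp [rk, tBeats])⟩
    refine one_lt_card.2 ?_
    rcases mem_crossing_or_mem_crossing hs₁ hs₂ hstr hM hM'
        (hstr.before_of_rk_lt hs₁ hM hM' hrk hrk3) hbeats hbeats' with h | h
    · exact ⟨_, hA_mem, _, h, hMA.symm⟩
    · exact ⟨_, hA_mem, _, h, hM'A.symm⟩
  · refine le_trans (by norm_num) (three_le_card_crossing hstr fun ⟨⟨M, hM, hM_T⟩, _⟩ => hA_T ?_)
    rcases eq_or_ne M (.A i) with rfl | hMA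
    · exact hM_T
    · refine (hstr.before_of_rk_lt hs₁ hA hM ?_ (by simp [rk])).trans hM_T
        (mset_nonempty_of_mem_groupMods hs₁ hM)
      simp only [groupMods, mem_insert, mem_singleton] at hM
      rcases hM with rfl | rfl | rfl | rfl | rfl | rfl <;> simp_all [rk]

theorem Splits.unique [IsStrictOrder _ r] (hs₁ : 0 < s₁) (hs₂ : 0 < s₂)
    (hstr : Structured r) (h : Splits r i j) (h' : Splits r i' j) : i = i' := by
  wlog hlt : i < i' generalizing i i'
  · exact ((not_lt.1 hlt).lt_or_eq.elim (this h' h) id).symm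
  obtain ⟨M, hM, hT_M⟩ := h.2
  obtain ⟨M', hM', hM'_T⟩ := h'.1
  have hT_T := (hT_M.trans (hstr.before_of_lt hlt hM hM')
    (mset_nonempty_of_mem_groupMods hs₁ hM)).trans hM'_T (mset_nonempty_of_mem_groupMods hs₁ hM')
  exact absurd hT_T (hT_T.not_before (mset_T_nonempty hs₂ j) (mset_T_nonempty hs₂ j))

theorem three_mul_sub_one_le_sum_card_crossing [IsStrictTotalOrder _ r] (hs₁ : 0 < s₁)
    (hs₂ : 0 < s₂) (hstr : Structured r) (j : Fin m) :
    3 * n - 1 ≤ ∑ i, #(crossing occ r i j) := by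
  have hle : ∀ i, 3 ≤ #(crossing occ r i j) + if Splits r i j then 1 else 0 := fun i => by
    split_ifs with h
    · exact Nat.add_le_add_right (two_le_card_crossing hs₁ hs₂ hstr) 1
    · exact three_le_card_crossing hstr h
  have hsplit : #{i | Splits r i j} ≤ 1 :=
    card_le_one.2 fun i hi i' hi' => (mem_filter.1 hi).2.unique hs₁ hs₂ hstr (mem_filter.1 hi').2
  have hsum := sum_le_sum fun i (_ : i ∈ univ) => hle i
  rw [sum_add_distrib, sum_boole, sum_const, card_univ, Fintype.card_fin, smul_eq_mul] at hsum
  push_cast at hsum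
  omega

variable (occ r) in
def IsBackPair (q : ModName n m × ModName n m) : Prop :=
  q.1 ≠ q.2 ∧ modArc occ q.1 q.2 ∧ Before r (mset q.2) (mset q.1)

theorem IsBackPair.mem_fasSet {q : ModName n m × ModName n m} (h : IsBackPair occ r q)
    {u v : Vtx n m s₁ s₂} (hu : u.1 = q.1) (hv : v.1 = q.2) : (u, v) ∈ fasSet (arc occ) r :=
  ⟨Or.inr ⟨hu ▸ hv ▸ h.1, hu ▸ hv ▸ h.2.1⟩, h.2.2 v hv u hu⟩

variable (r) in
noncomputable def crossPair (j : Fin m) (M : ModName n m) : ModName n m × ModName n m :=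
  if Before r (mset M) (mset (.T j)) then (.T j, M) else (M, .T j)

theorem isBackPair_crossPair [Std.Trichotomous r] (hstr : Structured r)
    (h : M ∈ crossing occ r i j) : IsBackPair occ r (crossPair r j M) := by
  obtain ⟨hM, hbeats⟩ := mem_filter.1 h
  have hgrp := mem_groupMods.1 hM
  have hne : M ≠ .T j := ne_T_of_mem_groupMods hM
  unfold crossPair
  split_ifs with hM_T
  · exact ⟨hne.symm, Or.inr (Or.inr (Or.inl ⟨j, i, rfl, hgrp, hbeats.1 hM_T⟩)), hM_T⟩
  · exact ⟨hne, Or.inr (Or.inr (Or.inr ⟨i, j, hgrp, rfl, mt hbeats.2 hM_T⟩)),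
      (hstr.before_or_before hne).resolve_left hM_T⟩

theorem mul_le_msize_crossPair (hM : M ∈ groupMods i) :
    s₁ * s₂ ≤ msize n m s₁ s₂ (crossPair r j M).1 * msize n m s₁ s₂ (crossPair r j M).2 := by
  have := le_msize_of_mem_groupMods (s₁ := s₁) (s₂ := s₂) hM
  unfold crossPair
  split_ifs
  · rw [mul_comm]; exact Nat.mul_le_mul_left _ this
  · exact Nat.mul_le_mul_right _ this

theorem T_mem_crossPair (j : Fin m) (M : ModName n m) :
    (crossPair r j M).1 = .T j ∨ (crossPair r j M).2 = .T j := by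
  unfold crossPair; split_ifs <;> simp

theorem crossPair_inj {j' : Fin m} (hM : M ∈ groupMods i) (hM' : M' ∈ groupMods i')
    (h : crossPair r j M = crossPair r j' M') : j = j' ∧ M = M' := by
  have hMT : ∀ j, M ≠ .T j := fun _ => ne_T_of_mem_groupMods hM
  have hM'T : ∀ j, M' ≠ .T j := fun _ => ne_T_of_mem_groupMods hM'
  unfold crossPair at h
  split_ifs at h <;> simp_all

theorem exists_isBackPair_mem_groupMods [IsTrans _ r] (hs₁ : 0 < s₁) (hstr : Structured r)
    {σ : Fin n → Bool} (hσ : Extracted r σ) (i : Fin n) :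
    ∃ q : ModName n m × ModName n m, q.1 ∈ groupMods i ∧ q.2 ∈ groupMods i ∧
      IsBackPair occ r q ∧
      s₁ * (if σ i then s₁ else msize n m s₁ s₂ (.E i)) ≤
        msize n m s₁ s₂ q.1 * msize n m s₁ s₂ q.2 := by
  have hne : ∀ M ∈ groupMods i, (mset M : Set (Vtx n m s₁ s₂)).Nonempty := fun _ =>
    mset_nonempty_of_mem_groupMods hs₁
  cases hσi : σ i
  · have hnot : ¬ (Before r (mset (.D i)) (mset (.E i)) ∧ Before r (mset (.E i)) (mset (.F i))) :=
      by simpa [hσi] using hσ i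
    rcases hstr.2.2.2 i with hDEF | ⟨hEF, hFD⟩ | ⟨hFD, hDE⟩
    · exact absurd hDEF hnot
    · refine ⟨(.D i, .E i), by simp [groupMods], by simp [groupMods],
        ⟨by simp, by simp [modArc, grp?, rk], hEF.trans hFD (hne _ (by simp [groupMods]))⟩, ?_⟩
      simp [msize]
    · refine ⟨(.E i, .F i), by simp [groupMods], by simp [groupMods],
        ⟨by simp, by simp [modArc, grp?, rk], hFD.trans hDE (hne _ (by simp [groupMods]))⟩, ?_⟩
      simp [msize, mul_comm]
  · obtain ⟨hDE, hEF⟩ := (hσ i).1 hσi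
    refine ⟨(.F i, .D i), by simp [groupMods], by simp [groupMods],
      ⟨by simp, by simp [modArc, grp?, rk], hDE.trans hEF (hne _ (by simp [groupMods]))⟩, ?_⟩
    simp [msize]

theorem sum_mul_ite_msize_E (hn : 0 < n) (σ : Fin n → Bool) {k : ℕ}
    (hk : #{i | σ i = true} = k) :
    ∑ i, s₁ * (if σ i then s₁ else msize n m s₁ s₂ (.E i)) =
      n * s₁ ^ 2 + 2 * (n - k) * s₁ + if σ ⟨n - 1, Nat.sub_lt hn one_pos⟩ then 0 else s₁ := by
  set last : Fin n := ⟨n - 1, Nat.sub_lt hn one_pos⟩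
  have hterm : ∀ i, s₁ * (if σ i then s₁ else msize n m s₁ s₂ (.E i)) =
      s₁ ^ 2 + (if σ i then 0 else 2 * s₁) +
        if last = i then (if σ last then 0 else s₁) else 0 := by
    intro i
    by_cases hi : last = i
    · subst hi; cases σ last <;> simp [msize, last] <;> ring
    · have : (i : ℕ) ≠ n - 1 := fun h => hi (Fin.ext h.symm)
      cases σ i <;> simp [msize, this, hi] <;> ring
  have hfalse : #{i | ¬ σ i = true} = n - k := by
    have := card_filter_add_card_filter_not (s := univ) (fun i : Fin n => σ i = true)
    simp only [card_univ, Fintype.card_fin, hk] at this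
    omega
  rw [sum_congr rfl fun i _ => hterm i, sum_add_distrib, sum_add_distrib, sum_ite_eq, sum_ite,
    sum_const_zero, sum_const, sum_const, hfalse, card_univ, Fintype.card_fin]
  simp only [smul_eq_mul, mem_univ, if_true]
  ring

theorem injOn_crossPair :
    Set.InjOn (fun x : Σ _ : Fin m × Fin n, ModName n m => crossPair r x.1.1 x.2)
      (univ.sigma fun p : Fin m × Fin n => crossing occ r p.2 p.1) := by
  rintro ⟨⟨j, i⟩, M⟩ hx ⟨⟨j', i'⟩, M'⟩ hx' h
  have hM := (mem_filter.1 (mem_sigma.1 hx).2).1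
  have hM' := (mem_filter.1 (mem_sigma.1 hx').2).1
  obtain ⟨rfl, rfl⟩ := crossPair_inj hM hM' h
  obtain rfl := eq_of_mem_groupMods hM hM'
  rfl

theorem mul_le_sum_crossPair [IsStrictTotalOrder _ r] (hs₁ : 0 < s₁) (hs₂ : 0 < s₂)
    (hstr : Structured r) :
    (3 * n - 1) * m * s₁ * s₂ ≤
      ∑ x ∈ univ.sigma fun p : Fin m × Fin n => crossing occ r p.2 p.1,
        msize n m s₁ s₂ (crossPair r x.1.1 x.2).1 * msize n m s₁ s₂ (crossPair r x.1.1 x.2).2 := by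
  rw [sum_sigma]
  calc (3 * n - 1) * m * s₁ * s₂ ≤ ∑ p : Fin m × Fin n, #(crossing occ r p.2 p.1) * (s₁ * s₂) := by
        rw [← sum_mul, Fintype.sum_prod_type, mul_assoc]
        refine Nat.mul_le_mul_right _ ?_
        simpa [mul_comm] using
          sum_le_sum fun j (_ : j ∈ univ) => three_mul_sub_one_le_sum_card_crossing hs₁ hs₂ hstr j
    _ ≤ _ := sum_le_sum fun p _ => by
        rw [← smul_eq_mul]
        exact card_nsmul_le_sum _ _ _ fun M hM => mul_le_msize_crossPair (mem_filter.1 hM).1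

theorem le_ncard_fasSet_of_structured [IsStrictTotalOrder _ r] (hs₁ : 0 < s₁) (hs₂ : 0 < s₂)
    (hstr : Structured r) {σ : Fin n → Bool} (hσ : Extracted r σ) :
    ∑ i, s₁ * (if σ i then s₁ else msize n m s₁ s₂ (.E i)) + (3 * n - 1) * m * s₁ * s₂ ≤
      (fasSet (arc occ) r).ncard := by
  choose gp hgp₁ hgp₂ hgp_back hgp_size using
    exists_isBackPair_mem_groupMods (occ := occ) hs₁ hstr hσ
  let C := univ.sigma fun p : Fin m × Fin n => crossing occ r p.2 p.1
  let g : Fin n ⊕ (Σ _ : Fin m × Fin n, ModName n m) → ModName n m × ModName n m :=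
    Sum.elim gp fun x => crossPair r x.1.1 x.2
  have hgp_ne : ∀ i j M, gp i ≠ crossPair r j M := fun i j M h => by
    rcases T_mem_crossPair (r := r) j M with hT | hT <;> rw [← h] at hT
    exacts [ne_T_of_mem_groupMods (hgp₁ i) hT, ne_T_of_mem_groupMods (hgp₂ i) hT]
  have hg : Set.InjOn g ((univ : Finset (Fin n)).disjSum C) := by
    rintro (i | x) hx (i' | x') hx' h
    · have h : gp i = gp i' := h
      exact congrArg Sum.inl (eq_of_mem_groupMods (hgp₁ i) (h ▸ hgp₁ i'))
    · exact absurd h (hgp_ne _ _ _)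
    · exact absurd h.symm (hgp_ne _ _ _)
    · exact congrArg Sum.inr (injOn_crossPair (inr_mem_disjSum.1 hx) (inr_mem_disjSum.1 hx') h)
  have hback : ∀ x ∈ univ.disjSum C, ∀ u v : Vtx n m s₁ s₂, u.1 = (g x).1 → v.1 = (g x).2 →
      (u, v) ∈ fasSet (arc occ) r := by
    rintro (i | ⟨p, M⟩) hx u v hu hv
    · exact (hgp_back i).mem_fasSet hu hv
    · exact (isBackPair_crossPair hstr (mem_sigma.1 (inr_mem_disjSum.1 hx)).2).mem_fasSet hu hv
  have key := sum_card_mul_card_le_ncard_fasSet Sigma.fst g hg hback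
  simp only [card_filter_fst_eq_msize, sum_disjSum] at key
  exact le_trans (Nat.add_le_add (sum_le_sum fun i _ => hgp_size i)
    (mul_le_sum_crossPair hs₁ hs₂ hstr)) key

end Tournament

theorem stmt16_general (n m s₁ s₂ : ℕ) (hn : 0 < n) (hs₁ : 0 < s₁) (hs₂ : 0 < s₂)
    (occ : Fin n → Fin m → Option Bool)
    (r : Vtx n m s₁ s₂ → Vtx n m s₁ s₂ → Prop) (hr : IsStrictTotalOrder (Vtx n m s₁ s₂) r)
    (hstr : Structured r)
    (σ : Fin n → Bool) (hσ : Extracted r σ) (k : ℕ)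
    (hk : (Finset.univ.filter (fun i : Fin n => σ i = true)).card = k) :
    n * s₁ ^ 2 + 2 * (n - k) * s₁ + (3 * n - 1) * m * s₁ * s₂ ≤
      (fasSet (arc occ) r).ncard ∧
    (σ ⟨n - 1, Nat.sub_lt hn one_pos⟩ = false →
      n * s₁ ^ 2 + 2 * (n - k) * s₁ + s₁ + (3 * n - 1) * m * s₁ * s₂ ≤
        (fasSet (arc occ) r).ncard) := by
  have key := le_ncard_fasSet_of_structured (occ := occ) hs₁ hs₂ hstr hσ
  rw [sum_mul_ite_msize_E hn σ hk] at key
  exact ⟨(Nat.add_le_add_right (Nat.le_add_right _ _) _).trans key,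
    fun hlast => by simpa [hlast] using key⟩

/-- A structured order whose extracted assignment `σ` satisfies `φ` and sets exactly `k`
variables to true implies a feedback arc set of size at least
`n·s₁² + 2(n−k)·s₁ + (3n−1)m·s₁·s₂`; if moreover `σ(x_n) = False`, of size at least
`n·s₁² + 2(n−k)·s₁ + s₁ + (3n−1)m·s₁·s₂`. -/
theorem stmt16 (n m s₁ s₂ : ℕ) (hn : 0 < n) (hm : 0 < m) (hs₁ : 0 < s₁) (hs₂ : 0 < s₂)
    (occ : Fin n → Fin m → Option Bool)
    (h3lit : ∀ j : Fin m, ({i : Fin n | occ i j ≠ none}).ncard ≤ 3)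
    (hallF : ∀ j : Fin m, ∃ i : Fin n, occ i j = some false)
    (r : Vtx n m s₁ s₂ → Vtx n m s₁ s₂ → Prop) (hr : IsStrictTotalOrder (Vtx n m s₁ s₂) r)
    (hstr : Structured r)
    (σ : Fin n → Bool) (hσ : Extracted r σ) (hsat : Sat occ σ) (k : ℕ)
    (hk : (Finset.univ.filter (fun i : Fin n => σ i = true)).card = k) :
    n * s₁ ^ 2 + 2 * (n - k) * s₁ + (3 * n - 1) * m * s₁ * s₂ ≤
      (fasSet (arc occ) r).ncard ∧
    (σ ⟨n - 1, Nat.sub_lt hn one_pos⟩ = false →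
      n * s₁ ^ 2 + 2 * (n - k) * s₁ + s₁ + (3 * n - 1) * m * s₁ * s₂ ≤
        (fasSet (arc occ) r).ncard) :=
  stmt16_general n m s₁ s₂ hn hs₁ hs₂ occ r hr hstr σ hσ k hk
end

section
/- An assignment σ' to the variables y_i^j satisfies φ' if and only if for every i ∈ {1,…,n} the values σ'(y_i^1),…,σ'(y_i^m) are all equal and the assignment σ defined by σ(x_i) = σ'(y_i^1) satisfies φ; moreover, in that case the weight of σ' equals m times the weight of σ. -/
/-- `σ'` satisfies the clauses of `R`: `(¬y_i^j ∨ y_i^{j+1})` for `1 ≤ j ≤ m−1` together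
with `(¬y_i^m ∨ y_i^1)`, i.e. cyclically `σ' i j = true → σ' i (j+1) = true`. -/
def SatR {n m : ℕ} [NeZero m] (σ' : Fin n → Fin m → Bool) : Prop :=
  ∀ i : Fin n, ∀ j : Fin m, σ' i j = true → σ' i (j + 1) = true

/-- `σ'` satisfies the clauses of `L`: the clauses of `φ` with `x_i` in `c_j` replaced
by `y_i^j`. -/
def SatL {n m : ℕ} (occ : Fin n → Fin m → Option Bool) (σ' : Fin n → Fin m → Bool) : Prop :=
  ∀ j : Fin m, ∃ i : Fin n,
    (occ i j = some true ∧ σ' i j = true) ∨ (occ i j = some false ∧ σ' i j = false)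

/-- `σ'` satisfies `φ'`. -/
def Sat' {n m : ℕ} [NeZero m] (occ : Fin n → Fin m → Option Bool)
    (σ' : Fin n → Fin m → Bool) : Prop :=
  SatR σ' ∧ SatL occ σ'

/-- The weight of an assignment to `φ'`. -/
def wt' {n m : ℕ} (σ' : Fin n → Fin m → Bool) : ℕ :=
  (Finset.univ.filter (fun p : Fin n × Fin m => σ' p.1 p.2 = true)).card

/-! The cyclic clauses `R` force `y_i^1 → y_i^2 → ⋯ → y_i^m → y_i^1`, so each row
`j ↦ σ' i j` of a model of `R` is constant. On constant rows the clauses `L` are literally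
the clauses of `φ`, and each true `x_i` contributes `m` true copies `y_i^j`. -/

open Fin.NatCast in
theorem Fin.forall_of_imp_add_one {m : ℕ} [NeZero m] {p : Fin m → Prop}
    (h : ∀ j, p j → p (j + 1)) {j : Fin m} (hj : p j) (j' : Fin m) : p j' := by
  have hadd : ∀ k : ℕ, p (j + k) := by
    intro k
    induction k with
    | zero => simpa using hj
    | succ k ih => simpa [add_assoc] using h _ ih
  simpa using hadd (j' - j).val

theorem satR_iff_forall_eq {n m : ℕ} [NeZero m] {σ' : Fin n → Fin m → Bool} :
    SatR σ' ↔ ∀ i j j', σ' i j = σ' i j' := by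
  refine ⟨fun h i j j' => ?_, fun h i j hj => h i (j + 1) j ▸ hj⟩
  by_cases hj : σ' i j = true
  · rw [hj, Fin.forall_of_imp_add_one (h i) hj j']
  · have hj' : ¬σ' i j' = true := fun hj' => hj (Fin.forall_of_imp_add_one (h i) hj' j)
    rw [Bool.not_eq_true] at hj hj'
    rw [hj, hj']

theorem wt'_const {n : ℕ} (m : ℕ) (σ : Fin n → Bool) :
    wt' (fun i (_ : Fin m) => σ i) = m * wt σ := by
  have hfilter : Finset.univ.filter (fun p : Fin n × Fin m => σ p.1 = true)
      = (Finset.univ.filter fun i => σ i = true) ×ˢ Finset.univ := by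
    ext; simp
  rw [wt', wt, hfilter, Finset.card_product, Finset.card_univ, Fintype.card_fin, mul_comm]

theorem stmt17_general (n m : ℕ) [NeZero m] (occ : Fin n → Fin m → Option Bool)
    (σ' : Fin n → Fin m → Bool) :
    (Sat' occ σ' ↔
      ((∀ i : Fin n, ∀ j j' : Fin m, σ' i j = σ' i j') ∧
        Sat occ (fun i => σ' i 0))) ∧
    (Sat' occ σ' → wt' σ' = m * wt (fun i => σ' i 0)) := by
  have hrows : (∀ i j j', σ' i j = σ' i j') → σ' = fun i _ => σ' i 0 :=
    fun hc => funext₂ fun i j => hc i j 0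
  have hsat : Sat' occ σ' ↔ (∀ i j j', σ' i j = σ' i j') ∧ Sat occ (fun i => σ' i 0) := by
    rw [Sat', satR_iff_forall_eq]
    refine and_congr_right fun hc => ?_
    conv_lhs => rw [hrows hc]
    exact Iff.rfl
  refine ⟨hsat, fun h => ?_⟩
  conv_lhs => rw [hrows (hsat.mp h).1]
  exact wt'_const m _

/-- `σ'` satisfies `φ'` iff for each `i` all the values `σ' i j` are equal and the
assignment `σ i = σ' i 0` (i.e. `σ(x_i) = σ'(y_i^1)`) satisfies `φ`; in that case
`wt' σ' = m * wt σ`. -/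
theorem stmt17 (n m : ℕ) [NeZero m] (occ : Fin n → Fin m → Option Bool)
    (hallF : ∀ j : Fin m, ∃ i : Fin n, occ i j = some false)
    (σ' : Fin n → Fin m → Bool) :
    (Sat' occ σ' ↔
      ((∀ i : Fin n, ∀ j j' : Fin m, σ' i j = σ' i j') ∧
        Sat occ (fun i => σ' i 0))) ∧
    (Sat' occ σ' → wt' σ' = m * wt (fun i => σ' i 0)) :=
  stmt17_general n m occ σ'
end

section
/- The formula φ' is satisfied by the all-False assignment, and φ has a satisfying assignment setting x_n to True whose weight is maximum among all satisfying assignments of φ if and only if φ' has a satisfying assignment setting y_n^1 to True whose weight is maximum among all satisfying assignments of φ'. -/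
/-! The cyclic implications `R` force every satisfying assignment of `φ'` to be constant along
each cycle `y_i^1, …, y_i^m`, so the satisfying assignments of `φ'` are exactly the
`m`-fold copies of satisfying assignments of `φ`. Copying multiplies the weight by `m > 0`,
hence maximum-weight assignments correspond, and `y_n^1` is the copy of `x_n`. -/

open Fin.NatCast Fin.CommRing in
theorem Fin.apply_eq_apply_of_le_apply_add_one {α : Type*} [PartialOrder α] {m : ℕ} [NeZero m]
    {f : Fin m → α} (hf : ∀ j, f j ≤ f (j + 1)) (j k : Fin m) : f j = f k := by
  have le_add_cast : ∀ (j : Fin m) (l : ℕ), f j ≤ f (j + l) := by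
    intro j l
    induction l with
    | zero => simp
    | succ l ih => exact ih.trans (by simpa [add_assoc] using hf (j + l))
  have le_apply : ∀ j k : Fin m, f j ≤ f k := fun j k => by
    simpa using le_add_cast j (k - j).val
  exact (le_apply j k).antisymm (le_apply k j)

def liftAssignment {n : ℕ} (m : ℕ) (σ : Fin n → Bool) : Fin n → Fin m → Bool := fun i _ => σ i

variable {n m : ℕ}

theorem SatR.eq_liftAssignment [NeZero m] {σ' : Fin n → Fin m → Bool} (h : SatR σ') :
    σ' = liftAssignment m (fun i => σ' i 0) := by
  funext i j
  exact Fin.apply_eq_apply_of_le_apply_add_one (fun j => Bool.le_iff_imp.2 (h i j)) j 0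

theorem sat'_liftAssignment_iff [NeZero m] {occ : Fin n → Fin m → Option Bool}
    {σ : Fin n → Bool} : Sat' occ (liftAssignment m σ) ↔ Sat occ σ :=
  ⟨fun h => h.2, fun h => ⟨fun _ _ => id, h⟩⟩

theorem sat'_iff_exists_liftAssignment [NeZero m] {occ : Fin n → Fin m → Option Bool}
    {σ' : Fin n → Fin m → Bool} :
    Sat' occ σ' ↔ ∃ σ, Sat occ σ ∧ σ' = liftAssignment m σ := by
  constructor
  · intro h
    exact ⟨_, sat'_liftAssignment_iff.1 (h.1.eq_liftAssignment ▸ h), h.1.eq_liftAssignment⟩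
  · rintro ⟨σ, hσ, rfl⟩
    exact sat'_liftAssignment_iff.2 hσ

theorem wt'_liftAssignment (σ : Fin n → Bool) : wt' (liftAssignment m σ) = m * wt σ := by
  have : Finset.univ.filter (fun p : Fin n × Fin m => liftAssignment m σ p.1 p.2 = true) =
      Finset.univ.filter (fun i => σ i = true) ×ˢ Finset.univ := by
    ext p
    simp only [Finset.mem_filter, Finset.mem_product, Finset.mem_univ, and_true, true_and]
    rfl
  rw [wt', wt, this, Finset.card_product, Finset.card_univ, Fintype.card_fin, mul_comm]

theorem isMax_liftAssignment_iff [NeZero m] {occ : Fin n → Fin m → Option Bool}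
    {σ : Fin n → Bool} :
    (∀ τ', Sat' occ τ' → wt' τ' ≤ wt' (liftAssignment m σ)) ↔
      ∀ τ, Sat occ τ → wt τ ≤ wt σ := by
  simp only [sat'_iff_exists_liftAssignment]
  constructor
  · intro h τ hτ
    have := h _ ⟨τ, hτ, rfl⟩
    rwa [wt'_liftAssignment, wt'_liftAssignment, Nat.mul_le_mul_left_iff (NeZero.pos m)] at this
  · rintro h _ ⟨τ, hτ, rfl⟩
    rw [wt'_liftAssignment, wt'_liftAssignment]
    exact Nat.mul_le_mul_left m (h τ hτ)

theorem sat'_false [NeZero m] {occ : Fin n → Fin m → Option Bool}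
    (h : ∀ j : Fin m, ∃ i : Fin n, occ i j = some false) : Sat' occ (fun _ _ => false) := by
  refine ⟨fun _ _ => id, fun j => ?_⟩
  obtain ⟨i, hi⟩ := h j
  exact ⟨i, .inr ⟨hi, rfl⟩⟩

/-- `φ'` is satisfied by the all-false assignment, and `φ` has a maximum-weight
satisfying assignment setting `x_n` to true iff `φ'` has a maximum-weight satisfying
assignment setting `y_n^1` to true. -/
theorem stmt18 (n m : ℕ) (hn : 0 < n) [NeZero m] (occ : Fin n → Fin m → Option Bool)
    (hallF : ∀ j : Fin m, ∃ i : Fin n, occ i j = some false) :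
    Sat' occ (fun _ _ => false) ∧
    ((∃ σ : Fin n → Bool, Sat occ σ ∧ σ ⟨n - 1, Nat.sub_lt hn one_pos⟩ = true ∧
        ∀ τ : Fin n → Bool, Sat occ τ → wt τ ≤ wt σ) ↔
      (∃ σ' : Fin n → Fin m → Bool, Sat' occ σ' ∧
        σ' ⟨n - 1, Nat.sub_lt hn one_pos⟩ 0 = true ∧
        ∀ τ' : Fin n → Fin m → Bool, Sat' occ τ' → wt' τ' ≤ wt' σ')) := by
  refine ⟨sat'_false hallF, ?_, ?_⟩
  · rintro ⟨σ, hsat, htop, hmax⟩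
    exact ⟨liftAssignment m σ, sat'_liftAssignment_iff.2 hsat, htop,
      isMax_liftAssignment_iff.2 hmax⟩
  · rintro ⟨σ', hsat', htop, hmax⟩
    obtain ⟨σ, hsat, rfl⟩ := sat'_iff_exists_liftAssignment.1 hsat'
    exact ⟨σ, hsat, htop, isMax_liftAssignment_iff.1 hmax⟩
end
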